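/- Stencil Theorem, part (a): let {B(α)}_{α∈(ZMod d)²} be any valid PPO frame (satisfying A1–A4). Then the stencil M := Wig[B(0)] (the doubled Wigner transform of the phase-point operator at the origin) is a valid stencil, satisfies P M = M, and its M-PPO frame reproduces the given frame: A^M(α) = B(α) for all α ∈ (ZMod d)². Hence every valid d×d discrete Wigner function is an M-DWF generated by some valid stencil. -/

import Mathlib

open scoped BigOperators
open Matrix

noncomputable section

/-- `omega n a = exp(2πi a / n)`, the `n`-th roots of unity raised to integer power `a`. -/
def omega (n : ℕ) (a : ℤ) : ℂ := Complex.exp (2 * Real.pi * Complex.I * a / n)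

/-- `Zpow d k = Σ_j ω_d^(k·j) |j⟩⟨j|`, the `k`-th power of the clock operator. -/
def Zpow (d : ℕ) (k : ℤ) : Matrix (ZMod d) (ZMod d) ℂ :=
  Matrix.of fun i j => if i = j then omega d (k * (j.val : ℤ)) else 0

/-- `Xpow d k = Σ_j |j+k⟩⟨j|`, the `k`-th power of the shift operator. -/
def Xpow (d : ℕ) (k : ℤ) : Matrix (ZMod d) (ZMod d) ℂ :=
  Matrix.of fun i j => if i = j + (k : ZMod d) then 1 else 0

/-- The Weyl–Heisenberg displacement operator `V(k) = ω_{2d}^{-k₁k₂} Z^{k₂} X^{k₁}` for `k ∈ ℤ²`. -/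
def Vint (d : ℕ) [NeZero d] (k : ℤ × ℤ) : Matrix (ZMod d) (ZMod d) ℂ :=
  omega (2 * d) (-(k.1 * k.2)) • (Zpow d k.2 * Xpow d k.1)

/-- The WHDO on the doubled phase space `(ZMod (2d))²`. -/
def V (d : ℕ) [NeZero d] (m : ZMod (2 * d) × ZMod (2 * d)) : Matrix (ZMod d) (ZMod d) ℂ :=
  Vint d ((m.1.val : ℤ), (m.2.val : ℤ))

/-- Discrete parity operator `R = Σ_j |-j⟩⟨j|`. -/
def R (d : ℕ) : Matrix (ZMod d) (ZMod d) ℂ :=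
  Matrix.of fun i j => if i = -j then 1 else 0

/-- Doubled phase-point operator `A(m) = V(m)·R`. -/
def A (d : ℕ) [NeZero d] (m : ZMod (2 * d) × ZMod (2 * d)) : Matrix (ZMod d) (ZMod d) ℂ :=
  V d m * R d

variable (d : ℕ) [NeZero d]

/-- Doubled Wigner transform: `Wig[O](m) = (1/(2d)) Tr(A(m)† O)`. -/
def Wig (O : Matrix (ZMod d) (ZMod d) ℂ) (m : ZMod (2 * d) × ZMod (2 * d)) : ℂ :=
  (1 / (2 * (d : ℂ))) * ((A d m)ᴴ * O).trace

/-- Doubled Weyl transform: `Op[f] = (1/2) Σ_m f(m) A(m)`. -/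
def OpW (f : ZMod (2 * d) × ZMod (2 * d) → ℂ) : Matrix (ZMod d) (ZMod d) ℂ :=
  (1 / 2 : ℂ) • ∑ m : ZMod (2 * d) × ZMod (2 * d), f m • A d m

/-- The projector `P = Wig ∘ Op` on functions on the doubled phase space. -/
def P (f : ZMod (2 * d) × ZMod (2 * d) → ℂ) : ZMod (2 * d) × ZMod (2 * d) → ℂ :=
  Wig d (OpW d f)

/-- Inner product on functions on the doubled phase space. -/
def ip (f g : ZMod (2 * d) × ZMod (2 * d) → ℂ) : ℂ :=
  ∑ m : ZMod (2 * d) × ZMod (2 * d), (starRingEnd ℂ) (f m) * g m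

/-- Cross-correlation `(f ⋆ g)(m) = Σ_{m'} conj(f m') g(m'+m)`. -/
def crossCor (f g : ZMod (2 * d) × ZMod (2 * d) → ℂ) (m : ZMod (2 * d) × ZMod (2 * d)) : ℂ :=
  ∑ m' : ZMod (2 * d) × ZMod (2 * d), (starRingEnd ℂ) (f m') * g (m' + m)

/-- The doubling map `ZMod d → ZMod (2d)`, `a ↦ 2a`. -/
def dbl (a : ZMod d) : ZMod (2 * d) := ((2 * a.val : ℕ) : ZMod (2 * d))

/-- The doubling map on the phase space. -/
def dbl2 (α : ZMod d × ZMod d) : ZMod (2 * d) × ZMod (2 * d) := (dbl d α.1, dbl d α.2)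

/-- A stencil `M` is valid if its projection `M̄ = P M` is real-valued (M1),
sums to 1 (M2), and satisfies the autocorrelation condition (M3). -/
def IsValidStencil (M : ZMod (2 * d) × ZMod (2 * d) → ℂ) : Prop :=
  (∀ m, (starRingEnd ℂ) (P d M m) = P d M m) ∧
  (∑ m : ZMod (2 * d) × ZMod (2 * d), P d M m) = 1 ∧
  (∀ α : ZMod d × ZMod d,
    crossCor d (P d M) (P d M) (dbl2 d α) = if α = 0 then 1 else 0)

/-- The `M`-PPO frame generated by a stencil `M`:
`A^M(α) = (1/2) Σ_{m'} M(m') A(m' + 2α)`. -/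
def AM (M : ZMod (2 * d) × ZMod (2 * d) → ℂ) (α : ZMod d × ZMod d) :
    Matrix (ZMod d) (ZMod d) ℂ :=
  (1 / 2 : ℂ) • ∑ m' : ZMod (2 * d) × ZMod (2 * d), M m' • A d (m' + dbl2 d α)

/-- A family of phase-point operators on `(ZMod d)²` is a valid PPO frame if it is
Hermitian (A1), trace-1 (A2), orthogonal (A3), and WHDO-covariant (A4). -/
def IsValidPPOFrame (B : ZMod d × ZMod d → Matrix (ZMod d) (ZMod d) ℂ) : Prop :=
  (∀ α, (B α)ᴴ = B α) ∧
  (∀ α, (B α).trace = 1) ∧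
  (∀ α β, ((B α)ᴴ * B β).trace = if α = β then (d : ℂ) else 0) ∧
  (∀ (k : ℤ × ℤ) (α : ZMod d × ZMod d),
    Vint d k * B α * (Vint d k)ᴴ = B (α + ((k.1 : ZMod d), (k.2 : ZMod d))))

/-- The `M`-Wigner transform: `Wig^M[O](α) = (1/d) Tr(A^M(α)† O)`. -/
def WigM (M : ZMod (2 * d) × ZMod (2 * d) → ℂ) (O : Matrix (ZMod d) (ZMod d) ℂ)
    (α : ZMod d × ZMod d) : ℂ :=
  (1 / (d : ℂ)) * ((AM d M α)ᴴ * O).trace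

/-- The `M`-Weyl transform: `Op^M[f] = Σ_α f(α) A^M(α)`. -/
def OpM (M : ZMod (2 * d) × ZMod (2 * d) → ℂ) (f : ZMod d × ZMod d → ℂ) :
    Matrix (ZMod d) (ZMod d) ℂ :=
  ∑ α : ZMod d × ZMod d, f α • AM d M α

/-- The symplectic discrete Fourier transform. -/
def SDFT (f : ZMod (2 * d) × ZMod (2 * d) → ℂ) (m : ZMod (2 * d) × ZMod (2 * d)) : ℂ :=
  (1 / (2 * (d : ℂ))) * ∑ m' : ZMod (2 * d) × ZMod (2 * d),
    omega (2 * d) (-((m.1.val : ℤ) * (m'.2.val : ℤ) - (m.2.val : ℤ) * (m'.1.val : ℤ))) * f m'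


/-- Coarse-grain-stencil PPO frame: `B(α) = (1/2) Σ_{b∈{0,1}²} A(2α + b)`. -/
def Bcgs (α : ZMod d × ZMod d) : Matrix (ZMod d) (ZMod d) ℂ :=
  (1 / 2 : ℂ) • ∑ b : ZMod 2 × ZMod 2,
    A d (dbl d α.1 + (b.1.val : ZMod (2 * d)), dbl d α.2 + (b.2.val : ZMod (2 * d)))

/-- Momentum basis state `|p⟩ = (1/√d) Σ_j ω_d^{p j} |j⟩`. -/
def pvec (p : ZMod d) : ZMod d → ℂ :=
  fun j => (1 / ((Real.sqrt d : ℝ) : ℂ)) * omega d ((p.val : ℤ) * (j.val : ℤ))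

/-- One-dimensional Dirichlet kernel `K(m) = (1/d) Σ_{t=-(d-1)/2}^{(d-1)/2} ω_{2d}^{t m}`. -/
def Kdir (m : ZMod (2 * d)) : ℂ :=
  (1 / (d : ℂ)) * ∑ t ∈ Finset.Icc (-(((d : ℤ) - 1) / 2)) (((d : ℤ) - 1) / 2),
    omega (2 * d) (t * (m.val : ℤ))

end

set_option maxHeartbeats 1000000

section Aux
variable (d : ℕ) [NeZero d]

lemma omega_add (n : ℕ) (a b : ℤ) : omega n (a + b) = omega n a * omega n b := by
  rw [omega, omega, omega, ← Complex.exp_add]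
  congr 1
  push_cast
  ring

lemma omega_zero (n : ℕ) : omega n 0 = 1 := by simp [omega]

lemma omega_eq_one_iff (n : ℕ) [NeZero n] (a : ℤ) :
    omega n a = 1 ↔ ((a : ZMod n) = 0) := by
  have hprim := Complex.isPrimitiveRoot_exp n (NeZero.ne n)
  have hexp : omega n a = (Complex.exp (2 * Real.pi * Complex.I / n)) ^ a := by
    rw [← Complex.exp_int_mul, omega]
    congr 1
    ring
  rw [hexp, hprim.zpow_eq_one_iff_dvd, ZMod.intCast_zmod_eq_zero_iff_dvd]

lemma omega_congr (n : ℕ) [NeZero n] {a b : ℤ} (h : (a : ZMod n) = (b : ZMod n)) :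
    omega n a = omega n b := by
  have h1 : omega n (b + (a - b)) = omega n b * omega n (a - b) := omega_add n b (a - b)
  have h2 : omega n (a - b) = 1 := by
    rw [omega_eq_one_iff]
    push_cast
    rw [h]; ring
  have h3 : b + (a - b) = a := by ring
  rw [h3, h2, mul_one] at h1
  exact h1

lemma omega_conj (n : ℕ) (a : ℤ) : (starRingEnd ℂ) (omega n a) = omega n (-a) := by
  rw [omega, omega, ← Complex.exp_conj]
  congr 1
  simp [map_div₀, Complex.conj_I, map_ofNat]
  try ring

lemma omega_double (a : ℤ) : omega d a = omega (2 * d) (2 * a) := by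
  have hd : (d : ℂ) ≠ 0 := Nat.cast_ne_zero.mpr (NeZero.ne d)
  rw [omega, omega]
  congr 1
  push_cast
  field_simp

lemma sum_omega (n : ℕ) [NeZero n] (c : ℤ) :
    ∑ x : ZMod n, omega n (c * (x.val : ℤ)) = if (c : ZMod n) = 0 then (n : ℂ) else 0 := by
  split_ifs with h
  · rw [Finset.sum_congr rfl (fun x _ => ?_), Finset.sum_const, Finset.card_univ, ZMod.card,
      nsmul_eq_mul, mul_one]
    rw [show (1 : ℂ) = omega n 0 from (omega_zero n).symm]
    apply omega_congr
    push_cast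
    rw [h]; ring
  · have key : omega n c * ∑ x : ZMod n, omega n (c * (x.val : ℤ)) =
        ∑ x : ZMod n, omega n (c * (x.val : ℤ)) := by
      rw [Finset.mul_sum]
      rw [← Equiv.sum_comp (Equiv.addRight (1 : ZMod n))
        (fun x => omega n (c * (x.val : ℤ)))]
      apply Finset.sum_congr rfl
      intro x _
      rw [← omega_add]
      apply omega_congr
      push_cast
      simp only [ZMod.natCast_zmod_val]
      simp [Equiv.coe_addRight]
      ring
    have hne : omega n c ≠ 1 := fun hc => h ((omega_eq_one_iff n c).mp hc)
    have h2 : (omega n c - 1) * ∑ x : ZMod n, omega n (c * (x.val : ℤ)) = 0 := by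
      rw [sub_mul, key, one_mul, sub_self]
    rcases mul_eq_zero.mp h2 with h3 | h3
    · exact absurd (sub_eq_zero.mp h3) hne
    · exact h3

end Aux
set_option linter.unusedSectionVars false

section Aux2
variable (d : ℕ) [NeZero d]

lemma hat_mod (t : ℕ) : ((2 * (t % d) : ℕ) : ZMod (2 * d)) = ((2 * t : ℕ) : ZMod (2 * d)) := by
  rw [ZMod.natCast_eq_natCast_iff]
  exact Nat.ModEq.mul_left' 2 (Nat.mod_modEq t d)

lemma dbl_eq (x : ZMod d) : dbl d x = 2 * ((x.val : ℕ) : ZMod (2 * d)) := by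
  rw [dbl]; push_cast; ring

lemma dbl_add (x y : ZMod d) : dbl d (x + y) = dbl d x + dbl d y := by
  rw [dbl, dbl, dbl, ZMod.val_add, hat_mod]
  push_cast; ring

lemma dbl_zero : dbl d 0 = 0 := by
  rw [dbl]; simp

lemma dbl_neg (x : ZMod d) : dbl d (-x) = - dbl d x := by
  have h := dbl_add d (-x) x
  rw [neg_add_cancel, dbl_zero] at h
  exact eq_neg_of_add_eq_zero_left h.symm

lemma dbl_sub (x y : ZMod d) : dbl d (x - y) = dbl d x - dbl d y := by
  rw [sub_eq_add_neg, dbl_add, dbl_neg, sub_eq_add_neg]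

lemma castdown_natCast (t : ℕ) : (((t : ZMod (2 * d)).val : ℕ) : ZMod d) = (t : ZMod d) := by
  rw [ZMod.val_natCast, ZMod.natCast_eq_natCast_iff]
  exact (Nat.mod_modEq t (2 * d)).of_dvd (dvd_mul_left d 2)

lemma dbl_castdown (x : ZMod (2 * d)) : dbl d (((x.val : ℕ) : ZMod d)) = 2 * x := by
  rw [dbl, ZMod.val_natCast, hat_mod]
  push_cast
  simp [ZMod.natCast_zmod_val]

lemma castdown_add (x y : ZMod (2 * d)) :
    (((x + y).val : ℕ) : ZMod d) = ((x.val : ℕ) : ZMod d) + ((y.val : ℕ) : ZMod d) := by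
  rw [ZMod.val_add, ← Nat.cast_add, ZMod.natCast_eq_natCast_iff]
  exact (Nat.mod_modEq _ (2 * d)).of_dvd (dvd_mul_left d 2)

lemma count_fiber (c : ZMod d) :
    ∑ m : ZMod (2 * d), (if ((m.val : ℕ) : ZMod d) = c then (1 : ℂ) else 0) = 2 := by
  have hd : 0 < d := Nat.pos_of_ne_zero (NeZero.ne d)
  rw [Finset.sum_boole]
  have hvc : c.val < d := ZMod.val_lt c
  have hne : ((c.val : ℕ) : ZMod (2 * d)) ≠ ((c.val + d : ℕ) : ZMod (2 * d)) := by
    intro h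
    have h1 := congrArg ZMod.val h
    rw [ZMod.val_cast_of_lt (by omega), ZMod.val_cast_of_lt (by omega)] at h1
    omega
  have hset : Finset.univ.filter (fun m : ZMod (2 * d) => ((m.val : ℕ) : ZMod d) = c)
      = {((c.val : ℕ) : ZMod (2 * d)), ((c.val + d : ℕ) : ZMod (2 * d))} := by
    ext a
    simp only [Finset.mem_filter, Finset.mem_univ, true_and, Finset.mem_insert,
      Finset.mem_singleton]
    have hva : a.val < 2 * d := ZMod.val_lt a
    have h1 : (((a.val : ℕ) : ZMod d) = c) ↔ a.val % d = c.val := by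
      conv_lhs => rw [← ZMod.natCast_zmod_val c]
      rw [ZMod.natCast_eq_natCast_iff', Nat.mod_eq_of_lt hvc]
    have h2 : (a = ((c.val : ℕ) : ZMod (2 * d))) ↔ a.val = c.val := by
      constructor
      · intro h; rw [h, ZMod.val_cast_of_lt (by omega)]
      · intro h; rw [← ZMod.natCast_zmod_val a, h]
    have h3 : (a = ((c.val + d : ℕ) : ZMod (2 * d))) ↔ a.val = c.val + d := by
      constructor
      · intro h; rw [h, ZMod.val_cast_of_lt (by omega)]
      · intro h; rw [← ZMod.natCast_zmod_val a, h]
    have hsplit : (a.val < d ∧ a.val % d = a.val) ∨ (d ≤ a.val ∧ a.val % d = a.val - d) := by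
      rcases lt_or_ge a.val d with h | h
      · exact Or.inl ⟨h, Nat.mod_eq_of_lt h⟩
      · refine Or.inr ⟨h, ?_⟩
        rw [Nat.mod_eq_sub_mod h, Nat.mod_eq_of_lt (by omega)]
    rw [h1, h2, h3]
    omega
  rw [hset, Finset.card_pair hne]
  norm_num

end Aux2
section Aux3
variable (d : ℕ) [NeZero d]

lemma omega_eq_of_dvd (n : ℕ) [NeZero n] {a b : ℤ} (h : (n : ℤ) ∣ (a - b)) :
    omega n a = omega n b := by
  apply omega_congr
  have h2 : ((a - b : ℤ) : ZMod n) = 0 := (ZMod.intCast_zmod_eq_zero_iff_dvd _ n).mpr h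
  push_cast at h2
  exact sub_eq_zero.mp h2

lemma Vint_entry (k : ℤ × ℤ) (i j : ZMod d) :
    Vint d k i j = omega (2 * d) (2 * k.2 * (i.val : ℤ) - k.1 * k.2) *
      (if i = j + ((k.1 : ℤ) : ZMod d) then 1 else 0) := by
  rw [Vint]
  simp only [Matrix.smul_apply, Matrix.mul_apply, Zpow, Xpow, Matrix.of_apply, smul_eq_mul,
    ite_mul, zero_mul, one_mul, mul_ite, mul_zero, mul_one]
  rw [Finset.sum_ite_eq' Finset.univ (j + ((k.1 : ℤ) : ZMod d))]
  simp only [Finset.mem_univ, if_true]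
  split_ifs with h
  · rw [← h, omega_double d (k.2 * (i.val : ℤ)), ← omega_add]
    congr 1
    ring
  · rw [mul_zero]

lemma A_entry (m : ZMod (2 * d) × ZMod (2 * d)) (i j : ZMod d) :
    A d m i j = omega (2 * d)
        (2 * (m.2.val : ℤ) * (i.val : ℤ) - (m.1.val : ℤ) * (m.2.val : ℤ)) *
      (if i + j = ((m.1.val : ℕ) : ZMod d) then 1 else 0) := by
  rw [A, V]
  have collapse : (Vint d ((m.1.val : ℤ), (m.2.val : ℤ)) * R d) i j
      = Vint d ((m.1.val : ℤ), (m.2.val : ℤ)) i (-j) := by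
    rw [Matrix.mul_apply]
    simp only [R, Matrix.of_apply, mul_ite, mul_one, mul_zero]
    rw [Finset.sum_ite_eq' Finset.univ (-j)]
    simp
  rw [collapse, Vint_entry]
  have hiff : (i = -j + (((m.1.val : ℤ) : ℤ) : ZMod d)) ↔ (i + j = ((m.1.val : ℕ) : ZMod d)) := by
    push_cast
    constructor <;> intro h <;> linear_combination h
  rw [if_congr hiff rfl rfl]

lemma A_herm (m : ZMod (2 * d) × ZMod (2 * d)) : (A d m)ᴴ = A d m := by
  ext i j
  rw [Matrix.conjTranspose_apply, A_entry, A_entry,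
    show ∀ z : ℂ, star z = (starRingEnd ℂ) z from fun _ => rfl]
  by_cases h : i + j = ((m.1.val : ℕ) : ZMod d)
  · have h' : j + i = ((m.1.val : ℕ) : ZMod d) := by rw [add_comm]; exact h
    rw [if_pos h, if_pos h', mul_one, mul_one, omega_conj]
    apply omega_eq_of_dvd
    obtain ⟨t, ht⟩ : (d : ℤ) ∣ ((i.val : ℤ) + (j.val : ℤ) - (m.1.val : ℤ)) := by
      apply (ZMod.intCast_zmod_eq_zero_iff_dvd _ d).mp
      push_cast
      simp only [ZMod.natCast_zmod_val]
      rw [h, sub_self]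
    exact ⟨-((m.2.val : ℤ) * t), by push_cast; linear_combination (-2 * (m.2.val : ℤ)) * ht⟩
  · have h' : ¬ (j + i = ((m.1.val : ℕ) : ZMod d)) := by rwa [add_comm]
    rw [if_neg h, if_neg h', mul_zero, mul_zero, map_zero]

end Aux3
section Aux4
variable (d : ℕ) [NeZero d]

lemma A_entry' (m1 m2 : ZMod (2 * d)) (i j : ZMod d) :
    A d (m1, m2) i j = omega (2 * d)
        (2 * (m2.val : ℤ) * (i.val : ℤ) - (m1.val : ℤ) * (m2.val : ℤ)) *
      (if i + j = ((m1.val : ℕ) : ZMod d) then 1 else 0) :=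
  A_entry d (m1, m2) i j

lemma sum_A_entry (i j : ZMod d) :
    ∑ m : ZMod (2 * d) × ZMod (2 * d), A d m i j = if i = j then (2 * (d : ℂ)) else 0 := by
  rw [Fintype.sum_prod_type]
  have hstep : ∀ m1 : ZMod (2 * d),
      ∑ m2 : ZMod (2 * d), A d (m1, m2) i j
      = (if i + j = ((m1.val : ℕ) : ZMod d) then 1 else 0) *
        (if m1 = ((2 * i.val : ℕ) : ZMod (2 * d)) then (2 * (d : ℂ)) else 0) := by
    intro m1
    have h1 : ∀ m2 : ZMod (2 * d), A d (m1, m2) i j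
        = (if i + j = ((m1.val : ℕ) : ZMod d) then 1 else 0) *
          omega (2 * d) ((2 * (i.val : ℤ) - (m1.val : ℤ)) * (m2.val : ℤ)) := by
      intro m2
      rw [A_entry']
      rw [show (2 * (i.val : ℤ) - (m1.val : ℤ)) * (m2.val : ℤ)
          = 2 * (m2.val : ℤ) * (i.val : ℤ) - (m1.val : ℤ) * (m2.val : ℤ) from by ring]
      ring
    rw [Finset.sum_congr rfl (fun m2 _ => h1 m2), ← Finset.mul_sum, sum_omega]
    congr 1
    have hcond : ((((2 * (i.val : ℤ) - (m1.val : ℤ)) : ℤ) : ZMod (2 * d)) = 0)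
        ↔ (m1 = ((2 * i.val : ℕ) : ZMod (2 * d))) := by
      push_cast
      simp only [ZMod.natCast_zmod_val]
      rw [sub_eq_zero]
      constructor <;> intro h <;> exact h.symm
    rw [if_congr hcond rfl rfl]
    split_ifs with h
    · push_cast; ring
    · rfl
  rw [Finset.sum_congr rfl (fun m1 _ => hstep m1)]
  have hsum : ∀ m1 : ZMod (2 * d),
      (if i + j = ((m1.val : ℕ) : ZMod d) then (1:ℂ) else 0) *
        (if m1 = ((2 * i.val : ℕ) : ZMod (2 * d)) then (2 * (d : ℂ)) else 0)
      = if m1 = ((2 * i.val : ℕ) : ZMod (2 * d)) then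
          ((if i + j = ((m1.val : ℕ) : ZMod d) then (1:ℂ) else 0) * (2 * (d : ℂ))) else 0 := by
    intro m1; split_ifs <;> ring
  rw [Finset.sum_congr rfl (fun m1 _ => hsum m1), Finset.sum_ite_eq' Finset.univ]
  simp only [Finset.mem_univ, if_true]
  rw [castdown_natCast]
  have hc : (((2 * i.val : ℕ) : ZMod d) = i + i) := by
    push_cast
    simp only [ZMod.natCast_zmod_val]
    ring
  rw [hc]
  have hiff : (i + j = i + i) ↔ (i = j) := by
    constructor <;> intro h <;> linear_combination -h
  rw [if_congr hiff rfl rfl]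
  split_ifs <;> ring

lemma sum_pair (a b i j : ZMod d) :
    ∑ m : ZMod (2 * d) × ZMod (2 * d), (starRingEnd ℂ) (A d m a b) * A d m i j
      = if a = i ∧ b = j then (4 * (d : ℂ)) else 0 := by
  rw [Fintype.sum_prod_type]
  have hterm : ∀ m1 m2 : ZMod (2 * d),
      (starRingEnd ℂ) (A d (m1, m2) a b) * A d (m1, m2) i j
      = ((if a + b = ((m1.val : ℕ) : ZMod d) then (1:ℂ) else 0) *
         (if i + j = ((m1.val : ℕ) : ZMod d) then (1:ℂ) else 0)) *
        omega (2 * d) ((2 * ((i.val : ℤ) - (a.val : ℤ))) * (m2.val : ℤ)) := by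
    intro m1 m2
    rw [A_entry', A_entry', _root_.map_mul, omega_conj, apply_ite (starRingEnd ℂ), _root_.map_one, _root_.map_zero,
      mul_mul_mul_comm, ← omega_add]
    rw [show -(2 * (m2.val : ℤ) * (a.val : ℤ) - (m1.val : ℤ) * (m2.val : ℤ))
        + (2 * (m2.val : ℤ) * (i.val : ℤ) - (m1.val : ℤ) * (m2.val : ℤ))
        = (2 * ((i.val : ℤ) - (a.val : ℤ))) * (m2.val : ℤ) from by ring]
    ring
  have hstep : ∀ m1 : ZMod (2 * d),
      ∑ m2 : ZMod (2 * d), (starRingEnd ℂ) (A d (m1, m2) a b) * A d (m1, m2) i j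
      = ((if a + b = ((m1.val : ℕ) : ZMod d) then (1:ℂ) else 0) *
         (if i + j = ((m1.val : ℕ) : ZMod d) then (1:ℂ) else 0)) *
        (if (((2 * ((i.val : ℤ) - (a.val : ℤ))) : ℤ) : ZMod (2 * d)) = 0
          then (2 * (d : ℂ)) else 0) := by
    intro m1
    rw [Finset.sum_congr rfl (fun m2 _ => hterm m1 m2), ← Finset.mul_sum, sum_omega]
    congr 1
    split_ifs with h
    · push_cast; ring
    · rfl
  rw [Finset.sum_congr rfl (fun m1 _ => hstep m1)]
  by_cases hai : a = i
  · subst hai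
    have hz : ((((2 * ((a.val : ℤ) - (a.val : ℤ))) : ℤ) : ZMod (2 * d)) = 0) := by
      norm_num
    rw [if_pos hz] at *
    by_cases hbj : b = j
    · subst hbj
      simp only [if_pos hz, true_and, if_pos rfl]
      have : ∀ m1 : ZMod (2 * d),
          ((if a + b = ((m1.val : ℕ) : ZMod d) then (1:ℂ) else 0) *
           (if a + b = ((m1.val : ℕ) : ZMod d) then (1:ℂ) else 0)) * (2 * (d : ℂ))
          = (if ((m1.val : ℕ) : ZMod d) = a + b then (1:ℂ) else 0) * (2 * (d : ℂ)) := by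
        intro m1
        rcases eq_or_ne (a + b) (((m1.val : ℕ) : ZMod d)) with h | h
        · rw [if_pos h, if_pos h.symm]; ring
        · rw [if_neg h, if_neg (Ne.symm h)]; ring
      rw [Finset.sum_congr rfl (fun m1 _ => this m1), ← Finset.sum_mul, count_fiber]
      simp only [if_true]
      ring
    · rw [if_neg (show ¬ (a = a ∧ b = j) from fun hc => hbj hc.2)]
      apply Finset.sum_eq_zero
      intro m1 _
      rcases eq_or_ne (a + b) (((m1.val : ℕ) : ZMod d)) with h | h
      · have h2 : ¬ (a + j = ((m1.val : ℕ) : ZMod d)) := by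
          intro h2
          apply hbj
          have h3 := h.trans h2.symm
          linear_combination h3
        rw [if_neg h2]; ring
      · rw [if_neg h]; ring
  · have hnz : ¬ ((((2 * ((i.val : ℤ) - (a.val : ℤ))) : ℤ) : ZMod (2 * d)) = 0) := by
      intro hc
      apply hai
      have hdvd : ((2 * d : ℕ) : ℤ) ∣ 2 * ((i.val : ℤ) - (a.val : ℤ)) :=
        (ZMod.intCast_zmod_eq_zero_iff_dvd _ _).mp hc
      have h2 : (d : ℤ) ∣ ((i.val : ℤ) - (a.val : ℤ)) := by
        rcases hdvd with ⟨t, ht⟩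
        exact ⟨t, by push_cast at ht; linarith⟩
      have h0 : ((((i.val : ℤ) - (a.val : ℤ)) : ℤ) : ZMod d) = 0 :=
        (ZMod.intCast_zmod_eq_zero_iff_dvd _ _).mpr h2
      push_cast at h0
      simp only [ZMod.natCast_zmod_val] at h0
      have := sub_eq_zero.mp h0
      exact this.symm
    rw [if_neg (show ¬ (a = i ∧ b = j) from fun hc => hai hc.1)]
    apply Finset.sum_eq_zero
    intro m1 _
    rw [if_neg hnz, mul_zero]

end Aux4
section Aux5
variable (d : ℕ) [NeZero d]

lemma trace_form (X Y : Matrix (ZMod d) (ZMod d) ℂ) :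
    (Xᴴ * Y).trace = ∑ p : ZMod d × ZMod d, (starRingEnd ℂ) (X p.1 p.2) * Y p.1 p.2 := by
  rw [Matrix.trace, Fintype.sum_prod_type]
  simp only [Matrix.diag, Matrix.mul_apply, Matrix.conjTranspose_apply]
  rw [Finset.sum_comm]
  rfl

lemma Wig_apply (O : Matrix (ZMod d) (ZMod d) ℂ) (m : ZMod (2 * d) × ZMod (2 * d)) :
    Wig d O m = (1 / (2 * (d : ℂ))) *
      ∑ p : ZMod d × ZMod d, (starRingEnd ℂ) (A d m p.1 p.2) * O p.1 p.2 := by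
  rw [Wig, trace_form]

lemma OpW_Wig (O : Matrix (ZMod d) (ZMod d) ℂ) : OpW d (Wig d O) = O := by
  ext i j
  rw [OpW]
  simp only [Matrix.smul_apply, Matrix.sum_apply, smul_eq_mul]
  have h1 : ∀ m : ZMod (2 * d) × ZMod (2 * d), Wig d O m * A d m i j
      = ∑ p : ZMod d × ZMod d,
        (1 / (2 * (d : ℂ))) * ((starRingEnd ℂ) (A d m p.1 p.2) * O p.1 p.2 * A d m i j) := by
    intro m
    rw [Wig_apply, Finset.mul_sum, Finset.sum_mul]
    exact Finset.sum_congr rfl (fun p _ => by ring)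
  rw [Finset.sum_congr rfl (fun m _ => h1 m), Finset.sum_comm]
  have h2 : ∀ p : ZMod d × ZMod d,
      ∑ m : ZMod (2 * d) × ZMod (2 * d),
        (1 / (2 * (d : ℂ))) * ((starRingEnd ℂ) (A d m p.1 p.2) * O p.1 p.2 * A d m i j)
      = (1 / (2 * (d : ℂ))) * O p.1 p.2 * (if p.1 = i ∧ p.2 = j then (4 * (d : ℂ)) else 0) := by
    intro p
    rw [← Finset.mul_sum]
    rw [show (∑ m : ZMod (2 * d) × ZMod (2 * d),
          (starRingEnd ℂ) (A d m p.1 p.2) * O p.1 p.2 * A d m i j)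
        = O p.1 p.2 * ∑ m : ZMod (2 * d) × ZMod (2 * d),
          (starRingEnd ℂ) (A d m p.1 p.2) * A d m i j from by
      rw [Finset.mul_sum]; exact Finset.sum_congr rfl (fun m _ => by ring)]
    rw [sum_pair]
    ring
  rw [Finset.sum_congr rfl (fun p _ => h2 p)]
  have h3 : ∀ p : ZMod d × ZMod d,
      (1 / (2 * (d : ℂ))) * O p.1 p.2 * (if p.1 = i ∧ p.2 = j then (4 * (d : ℂ)) else 0)
      = if p = (i, j) then (1 / (2 * (d : ℂ))) * O p.1 p.2 * (4 * (d : ℂ)) else 0 := by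
    intro p
    have hiff : (p.1 = i ∧ p.2 = j) ↔ p = (i, j) :=
      ⟨fun h => Prod.ext h.1 h.2, fun h => ⟨congrArg Prod.fst h, congrArg Prod.snd h⟩⟩
    rw [if_congr hiff rfl rfl]
    split_ifs <;> ring
  rw [Finset.sum_congr rfl (fun p _ => h3 p), Finset.sum_ite_eq' Finset.univ (i, j)]
  simp only [Finset.mem_univ, if_true]
  have hd : (d : ℂ) ≠ 0 := Nat.cast_ne_zero.mpr (NeZero.ne d)
  have hkey : (1/2 : ℂ) * (1/(2*(d:ℂ)) * (4*(d:ℂ))) = 1 := by field_simp; ring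
  linear_combination (O i j) * hkey

lemma P_Wig (O : Matrix (ZMod d) (ZMod d) ℂ) : P d (Wig d O) = Wig d O := by
  rw [P, OpW_Wig]

lemma OpW_Wig_entry (O : Matrix (ZMod d) (ZMod d) ℂ) (a b : ZMod d) :
    ∑ m : ZMod (2 * d) × ZMod (2 * d), Wig d O m * A d m a b = 2 * O a b := by
  have h0 := OpW_Wig d O
  rw [OpW] at h0
  have h1 := congrFun (congrFun h0 a) b
  simp only [Matrix.smul_apply, Matrix.sum_apply, smul_eq_mul] at h1
  linear_combination 2 * h1

lemma ip_Wig (O1 O2 : Matrix (ZMod d) (ZMod d) ℂ) :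
    ∑ m : ZMod (2 * d) × ZMod (2 * d), (starRingEnd ℂ) (Wig d O1 m) * Wig d O2 m
      = (1 / (d : ℂ)) * ∑ p : ZMod d × ZMod d, (starRingEnd ℂ) (O1 p.1 p.2) * O2 p.1 p.2 := by
  have h1 : ∀ m : ZMod (2 * d) × ZMod (2 * d),
      (starRingEnd ℂ) (Wig d O1 m) * Wig d O2 m
      = ∑ p : ZMod d × ZMod d, (1 / (2 * (d : ℂ))) *
          ((starRingEnd ℂ) (Wig d O1 m * A d m p.1 p.2) * O2 p.1 p.2) := by
    intro m
    rw [Wig_apply d O2 m, Finset.mul_sum, Finset.mul_sum]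
    exact Finset.sum_congr rfl (fun p _ => by rw [_root_.map_mul]; ring)
  rw [Finset.sum_congr rfl (fun m _ => h1 m), Finset.sum_comm, Finset.mul_sum]
  refine Finset.sum_congr rfl (fun p _ => ?_)
  rw [← Finset.mul_sum, ← Finset.sum_mul, ← map_sum (starRingEnd ℂ) _ Finset.univ,
    OpW_Wig_entry, _root_.map_mul]
  have h2 : (starRingEnd ℂ) (2 : ℂ) = 2 := Complex.conj_ofNat 2
  rw [h2]
  ring

end Aux5
section Aux6
variable (d : ℕ) [NeZero d]

lemma Vint_neg (k : ℤ × ℤ) : (Vint d k)ᴴ = Vint d (-k.1, -k.2) := by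
  ext i j
  rw [Matrix.conjTranspose_apply, show ∀ z : ℂ, star z = (starRingEnd ℂ) z from fun _ => rfl,
    Vint_entry, Vint_entry]
  by_cases h : j = i + ((k.1 : ℤ) : ZMod d)
  · have h' : i = j + (((-k.1 : ℤ) : ℤ) : ZMod d) := by
      push_cast
      push_cast at h
      linear_combination -h
    rw [if_pos h, if_pos h', mul_one, mul_one, omega_conj]
    apply omega_eq_of_dvd
    obtain ⟨t, ht⟩ : (d : ℤ) ∣ ((j.val : ℤ) - (i.val : ℤ) - k.1) := by
      apply (ZMod.intCast_zmod_eq_zero_iff_dvd _ _).mp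
      push_cast
      simp only [ZMod.natCast_zmod_val]
      push_cast at h
      rw [h]; ring
    refine ⟨-(k.2 * t), ?_⟩
    push_cast
    linear_combination (-2 * k.2) * ht
  · have h' : ¬ (i = j + (((-k.1 : ℤ) : ℤ) : ZMod d)) := by
      intro h2
      apply h
      push_cast
      push_cast at h2
      linear_combination -h2
    rw [if_neg h, if_neg h', mul_zero, mul_zero, map_zero]

lemma castdown_dbl (x : ZMod d) : (((dbl d x).val : ℕ) : ZMod d) = 2 * x := by
  rw [dbl, castdown_natCast]
  push_cast
  simp only [ZMod.natCast_zmod_val]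

lemma A_cov (α : ZMod d × ZMod d) (m : ZMod (2 * d) × ZMod (2 * d)) :
    Vint d ((α.1.val : ℤ), (α.2.val : ℤ)) * A d m * (Vint d ((α.1.val : ℤ), (α.2.val : ℤ)))ᴴ
      = A d (m + dbl2 d α) := by
  set W := Vint d ((α.1.val : ℤ), (α.2.val : ℤ)) with hW
  have hWent : ∀ (x : ZMod d) (l : ZMod d), W x l =
      if l = x - α.1 then omega (2 * d)
        (2 * (α.2.val : ℤ) * (x.val : ℤ) - (α.1.val : ℤ) * (α.2.val : ℤ)) else 0 := by
    intro x l
    rw [hW, Vint_entry]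
    have hiff : (x = l + (((α.1.val : ℤ) : ℤ) : ZMod d)) ↔ (l = x - α.1) := by
      push_cast
      simp only [ZMod.natCast_zmod_val]
      constructor <;> intro h <;> linear_combination -h
    rw [if_congr hiff rfl rfl]
    split_ifs <;> ring
  ext i j
  have step1 : ∀ l' : ZMod d, (W * A d m) i l'
      = omega (2 * d) (2 * (α.2.val : ℤ) * (i.val : ℤ) - (α.1.val : ℤ) * (α.2.val : ℤ)) *
        A d m (i - α.1) l' := by
    intro l'
    rw [Matrix.mul_apply]
    rw [Finset.sum_congr rfl (fun l _ => by rw [hWent i l, ite_mul, zero_mul]),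
      Finset.sum_ite_eq' Finset.univ]
    simp
  have step2 : (W * A d m * Wᴴ) i j
      = omega (2 * d) (2 * (α.2.val : ℤ) * (i.val : ℤ) - (α.1.val : ℤ) * (α.2.val : ℤ)) *
        (starRingEnd ℂ) (omega (2 * d)
          (2 * (α.2.val : ℤ) * (j.val : ℤ) - (α.1.val : ℤ) * (α.2.val : ℤ))) *
        A d m (i - α.1) (j - α.1) := by
    rw [Matrix.mul_apply]
    have hterm : ∀ l' : ZMod d, (W * A d m) i l' * Wᴴ l' j
        = if l' = j - α.1 then
            omega (2 * d) (2 * (α.2.val : ℤ) * (i.val : ℤ) - (α.1.val : ℤ) * (α.2.val : ℤ)) *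
            (starRingEnd ℂ) (omega (2 * d)
              (2 * (α.2.val : ℤ) * (j.val : ℤ) - (α.1.val : ℤ) * (α.2.val : ℤ))) *
            A d m (i - α.1) l' else 0 := by
      intro l'
      rw [step1, Matrix.conjTranspose_apply,
        show ∀ z : ℂ, star z = (starRingEnd ℂ) z from fun _ => rfl, hWent j l',
        apply_ite (starRingEnd ℂ), map_zero]
      split_ifs <;> ring
    rw [Finset.sum_congr rfl (fun l' _ => hterm l'), Finset.sum_ite_eq' Finset.univ]
    simp
  rw [step2, A_entry, A_entry]
  rw [show m + dbl2 d α = (m.1 + dbl d α.1, m.2 + dbl d α.2) from rfl]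
  simp only [Prod.fst_add, Prod.snd_add, dbl2]
  by_cases h : (i - α.1) + (j - α.1) = ((m.1.val : ℕ) : ZMod d)
  · have hR : i + j = (((m.1 + dbl d α.1).val : ℕ) : ZMod d) := by
      rw [castdown_add, castdown_dbl]
      linear_combination h
    rw [if_pos h, if_pos hR, mul_one, mul_one, omega_conj, ← omega_add, ← omega_add]
    have Hu : (2 : ZMod (2 * d)) * (((i - α.1).val : ℕ) : ZMod (2 * d))
        = 2 * ((i.val : ℕ) : ZMod (2 * d)) - 2 * ((α.1.val : ℕ) : ZMod (2 * d)) := by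
      have := dbl_sub d i α.1
      rw [dbl_eq, dbl_eq, dbl_eq] at this
      exact this
    have Hsum0 := congrArg (dbl d) h
    rw [dbl_add, dbl_sub, dbl_sub, dbl_castdown] at Hsum0
    rw [dbl_eq, dbl_eq, dbl_eq] at Hsum0
    apply omega_congr
    push_cast
    simp only [ZMod.natCast_zmod_val]
    rw [dbl_eq, dbl_eq]
    linear_combination (m.2 : ZMod (2 * d)) * Hu - (((α.2.val : ℕ) : ZMod (2 * d))) * Hsum0
  · have hR : ¬ (i + j = (((m.1 + dbl d α.1).val : ℕ) : ZMod d)) := by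
      intro h2
      apply h
      rw [castdown_add, castdown_dbl] at h2
      linear_combination h2
    rw [if_neg h, if_neg hR, mul_zero, mul_zero, mul_zero]

end Aux6
section Aux7
variable (d : ℕ) [NeZero d]

lemma conj_half : (starRingEnd ℂ) (1 / (2 * (d : ℂ))) = 1 / (2 * (d : ℂ)) := by
  rw [map_div₀, _root_.map_one, _root_.map_mul, Complex.conj_ofNat 2, Complex.conj_natCast]

lemma Wig_real (O : Matrix (ZMod d) (ZMod d) ℂ) (hO : Oᴴ = O) (m : ZMod (2 * d) × ZMod (2 * d)) :
    (starRingEnd ℂ) (Wig d O m) = Wig d O m := by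
  rw [Wig_apply, _root_.map_mul, conj_half, map_sum]
  congr 1
  have h1 : ∀ p : ZMod d × ZMod d,
      (starRingEnd ℂ) ((starRingEnd ℂ) (A d m p.1 p.2) * O p.1 p.2)
      = (starRingEnd ℂ) (A d m p.2 p.1) * O p.2 p.1 := by
    intro p
    rw [_root_.map_mul, Complex.conj_conj]
    have e1 : A d m p.1 p.2 = (starRingEnd ℂ) (A d m p.2 p.1) := by
      conv_lhs => rw [← A_herm d m]
      rw [Matrix.conjTranspose_apply]
      rfl
    have e2 : (starRingEnd ℂ) (O p.1 p.2) = O p.2 p.1 := by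
      conv_rhs => rw [← hO]
      rw [Matrix.conjTranspose_apply]
      rfl
    rw [e1, e2]
  rw [Finset.sum_congr rfl (fun p _ => h1 p)]
  exact Fintype.sum_equiv (Equiv.prodComm _ _) _ _ (fun p => rfl)

lemma Wig_sum (O : Matrix (ZMod d) (ZMod d) ℂ) :
    ∑ m : ZMod (2 * d) × ZMod (2 * d), Wig d O m = O.trace := by
  rw [Finset.sum_congr rfl (fun m _ => Wig_apply d O m), ← Finset.mul_sum, Finset.sum_comm]
  have h1 : ∀ p : ZMod d × ZMod d,
      ∑ m : ZMod (2 * d) × ZMod (2 * d), (starRingEnd ℂ) (A d m p.1 p.2) * O p.1 p.2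
      = (if p.1 = p.2 then (2 * (d : ℂ)) else 0) * O p.1 p.2 := by
    intro p
    rw [← Finset.sum_mul, ← map_sum, sum_A_entry, apply_ite (starRingEnd ℂ), map_zero]
    congr 2
    rw [_root_.map_mul, Complex.conj_ofNat 2, Complex.conj_natCast]
  rw [Finset.sum_congr rfl (fun p _ => h1 p), Fintype.sum_prod_type]
  have h2 : ∀ a : ZMod d, ∑ b : ZMod d, (if a = b then (2 * (d : ℂ)) else 0) * O a b
      = 2 * (d : ℂ) * O a a := by
    intro a
    rw [Finset.sum_congr rfl (fun b _ => by rw [ite_mul, zero_mul]), Finset.sum_ite_eq]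
    simp
  rw [Finset.sum_congr rfl (fun a _ => h2 a), ← Finset.mul_sum, Matrix.trace]
  have hd : (d : ℂ) ≠ 0 := Nat.cast_ne_zero.mpr (NeZero.ne d)
  have hkey : (1 / (2 * (d : ℂ))) * (2 * (d : ℂ)) = 1 := by field_simp
  calc (1 / (2 * (d : ℂ))) * (2 * (d : ℂ) * ∑ a : ZMod d, O a a)
      = ((1 / (2 * (d : ℂ))) * (2 * (d : ℂ))) * ∑ a : ZMod d, O a a := by ring
    _ = ∑ a : ZMod d, O a a := by rw [hkey, one_mul]
    _ = ∑ a : ZMod d, O.diag a := rfl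

lemma Wig_shift (O : Matrix (ZMod d) (ZMod d) ℂ) (α : ZMod d × ZMod d)
    (m : ZMod (2 * d) × ZMod (2 * d)) :
    Wig d O (m + dbl2 d α)
      = Wig d ((Vint d ((α.1.val : ℤ), (α.2.val : ℤ)))ᴴ * O *
          Vint d ((α.1.val : ℤ), (α.2.val : ℤ))) m := by
  set W := Vint d ((α.1.val : ℤ), (α.2.val : ℤ)) with hW
  rw [Wig, Wig, ← A_cov d α m]
  congr 1
  have hT : (W * A d m * Wᴴ)ᴴ = W * ((A d m)ᴴ * Wᴴ) := by
    rw [Matrix.conjTranspose_mul, Matrix.conjTranspose_mul,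
      Matrix.conjTranspose_conjTranspose]
  rw [hT]
  rw [show W * ((A d m)ᴴ * Wᴴ) * O = W * ((A d m)ᴴ * Wᴴ * O) from by
    rw [Matrix.mul_assoc]]
  rw [Matrix.trace_mul_comm]
  rw [show (A d m)ᴴ * Wᴴ * O * W = (A d m)ᴴ * (Wᴴ * O * W) from by
    rw [Matrix.mul_assoc, Matrix.mul_assoc, Matrix.mul_assoc]]

end Aux7
theorem stmt13 (d : ℕ) [NeZero d] (B : ZMod d × ZMod d → Matrix (ZMod d) (ZMod d) ℂ)
    (hB : IsValidPPOFrame d B) :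
    IsValidStencil d (Wig d (B 0)) ∧
    P d (Wig d (B 0)) = Wig d (B 0) ∧
    (∀ α : ZMod d × ZMod d, AM d (Wig d (B 0)) α = B α) := by
  obtain ⟨hB1, hB2, hB3, hB4⟩ := hB
  have hd : (d : ℂ) ≠ 0 := Nat.cast_ne_zero.mpr (NeZero.ne d)
  have hcast2 : ∀ x : ZMod d, (((x.val : ℤ)) : ZMod d) = x := by
    intro x; push_cast; simp [ZMod.natCast_zmod_val]
  have hcast3 : ∀ x : ZMod d, (((-(x.val : ℤ)) : ℤ) : ZMod d) = -x := by
    intro x; push_cast; simp [ZMod.natCast_zmod_val]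
  have hconjB : ∀ α : ZMod d × ZMod d,
      (Vint d ((α.1.val : ℤ), (α.2.val : ℤ)))ᴴ * B 0 * Vint d ((α.1.val : ℤ), (α.2.val : ℤ))
        = B (-α) := by
    intro α
    have hk := hB4 ((-(α.1.val : ℤ)), (-(α.2.val : ℤ))) 0
    have hV2 : (Vint d ((-(α.1.val : ℤ)), (-(α.2.val : ℤ))))ᴴ
        = Vint d ((α.1.val : ℤ), (α.2.val : ℤ)) := by
      rw [Vint_neg]
      norm_num
    rw [hV2] at hk
    rw [Vint_neg]
    rw [show ((-(((α.1.val : ℤ), (α.2.val : ℤ)) : ℤ × ℤ).1, -(((α.1.val : ℤ), (α.2.val : ℤ)) : ℤ × ℤ).2) : ℤ × ℤ)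
      = ((-(α.1.val : ℤ)), (-(α.2.val : ℤ))) from rfl]
    rw [hk]
    apply congrArg B
    rw [show ((((-(α.1.val : ℤ) : ℤ)) : ZMod d), (((-(α.2.val : ℤ) : ℤ)) : ZMod d))
      = ((-α.1 : ZMod d), (-α.2 : ZMod d)) from by rw [hcast3, hcast3]]
    rw [zero_add]
    rfl
  have hAM : ∀ α : ZMod d × ZMod d, AM d (Wig d (B 0)) α = B α := by
    intro α
    set W := Vint d ((α.1.val : ℤ), (α.2.val : ℤ)) with hWdef
    have h1 : ∀ m' : ZMod (2 * d) × ZMod (2 * d),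
        Wig d (B 0) m' • A d (m' + dbl2 d α) = W * (Wig d (B 0) m' • A d m') * Wᴴ := by
      intro m'
      rw [← A_cov d α m', Matrix.mul_smul, Matrix.smul_mul]
    rw [AM, Finset.sum_congr rfl (fun m' _ => h1 m'), ← Finset.sum_mul, ← Finset.mul_sum]
    rw [show (1 / 2 : ℂ) • (W * (∑ m' : ZMod (2 * d) × ZMod (2 * d),
          Wig d (B 0) m' • A d m') * Wᴴ)
        = W * ((1 / 2 : ℂ) • ∑ m' : ZMod (2 * d) × ZMod (2 * d),
          Wig d (B 0) m' • A d m') * Wᴴ from by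
      rw [Matrix.mul_smul, Matrix.smul_mul]]
    rw [← OpW, OpW_Wig]
    have hk := hB4 (((α.1.val : ℤ)), ((α.2.val : ℤ))) 0
    rw [← hWdef] at hk
    rw [hk]
    apply congrArg B
    rw [show (((((α.1.val : ℤ)) : ZMod d), ((((α.2.val : ℤ))) : ZMod d)))
      = ((α.1 : ZMod d), (α.2 : ZMod d)) from by rw [hcast2, hcast2]]
    rw [zero_add]
  refine ⟨⟨?_, ?_, ?_⟩, P_Wig d (B 0), hAM⟩
  · intro m
    rw [P_Wig]
    exact Wig_real d (B 0) (hB1 0) m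
  · rw [P_Wig, Wig_sum, hB2 0]
  · intro α
    rw [P_Wig, crossCor]
    have hsh : ∀ m' : ZMod (2 * d) × ZMod (2 * d),
        Wig d (B 0) (m' + dbl2 d α) = Wig d (B (-α)) m' := by
      intro m'
      rw [Wig_shift d (B 0) α m', hconjB α]
    rw [Finset.sum_congr rfl (fun m' _ => by rw [hsh m']), ip_Wig, ← trace_form, hB3 0 (-α)]
    rcases eq_or_ne α 0 with h | h
    · subst h
      rw [if_pos (by rw [neg_zero]), if_pos rfl]
      field_simp
    · rw [if_neg (fun hc : (0 : ZMod d × ZMod d) = -α => h (neg_eq_zero.mp hc.symm)),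
        if_neg h, mul_zero]
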